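/- arXiv:1308.1980 — 2 statements merged into one kernel-verified Lean document; each statement's English description precedes it below -/
import Mathlib

section
/- Let m_l, m_r be complex numbers with strictly positive imaginary parts, a ∈ ℝ nonzero, and G = -(a² m_r - m_l⁻¹)⁻¹ (denominator nonzero). Suppose the 2×2 matrix s with s_{ll} = 1 + 2i a² G Im(m_l), s_{rr} = 1 + 2i a² G Im(m_r), s_{lr} = s_{rl} = 2i a² G √(Im(m_l) Im(m_r)) satisfies |s_{lr}| = 1. Then Re(G) = 0. -/
/-! The first column of a unitary matrix is a unit vector, so |s_lr| = |s_rl| = 1 forces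
s_ll = 0; the imaginary part of s_ll = 1 + 2i a² Im(m_l) G is 2 a² Im(m_l) Re G. -/

open scoped Matrix

namespace Matrix

variable {𝕜 n : Type*} [RCLike 𝕜] [Fintype n] [DecidableEq n] {U : Matrix n n 𝕜}

theorem sum_norm_sq_apply_eq_one_of_conjTranspose_mul_self (hU : Uᴴ * U = 1) (j : n) :
    ∑ i, ‖U i j‖ ^ 2 = 1 := by
  have hjj : ∑ i, star (U i j) * U i j = 1 := by
    simpa [mul_apply] using congrFun (congrFun hU j) j
  simp only [RCLike.star_def, RCLike.conj_mul] at hjj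
  exact_mod_cast hjj

theorem apply_eq_zero_of_norm_apply_eq_one_of_conjTranspose_mul_self (hU : Uᴴ * U = 1)
    {i k j : n} (hik : i ≠ k) (hk : ‖U k j‖ = 1) : U i j = 0 := by
  have hsum := sum_norm_sq_apply_eq_one_of_conjTranspose_mul_self hU j
  rw [← Finset.add_sum_erase _ _ (Finset.mem_univ k), hk, one_pow, add_eq_left] at hsum
  have := (Finset.sum_eq_zero_iff_of_nonneg fun _ _ => sq_nonneg _).mp hsum i
    (Finset.mem_erase.mpr ⟨hik, Finset.mem_univ i⟩)
  simpa using this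

end Matrix

open Complex in
theorem stmt_11_general (a : ℝ) (ha : a ≠ 0) (ml mr : ℂ)
    (hml : 0 < ml.im)
    (G : ℂ)
    (s : Matrix (Fin 2) (Fin 2) ℂ)
    (hs : s = !![1 + 2 * I * (a : ℂ) ^ 2 * G * (ml.im : ℂ),
                 2 * I * (a : ℂ) ^ 2 * G * (Real.sqrt (ml.im * mr.im) : ℂ);
                 2 * I * (a : ℂ) ^ 2 * G * (Real.sqrt (ml.im * mr.im) : ℂ),
                 1 + 2 * I * (a : ℂ) ^ 2 * G * (mr.im : ℂ)])
    (hunit : s.conjTranspose * s = 1)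
    (hlr : ‖s 0 1‖ = 1) :
    G.re = 0 := by
  have hsymm : s 1 0 = s 0 1 := by subst hs; rfl
  have hll : s 0 0 = 0 := Matrix.apply_eq_zero_of_norm_apply_eq_one_of_conjTranspose_mul_self
    hunit zero_ne_one (hsymm ▸ hlr)
  have hll_eq : s 0 0 = 1 + 2 * I * ((a ^ 2 * ml.im : ℝ) : ℂ) * G := by
    subst hs
    push_cast
    simp only [Matrix.of_apply, Matrix.cons_val', Matrix.cons_val_zero, Matrix.empty_val',
      Matrix.cons_val_fin_one]
    ring
  have hpos : 0 < a ^ 2 * ml.im := by positivity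
  generalize a ^ 2 * ml.im = c at hll_eq hpos
  have him : 2 * c * G.re = 0 := by simpa [hll] using congrArg im hll_eq.symm
  simpa [hpos.ne'] using him

open Complex in
/-- If the scattering matrix s is unitary and |s_lr| = 1 (stationary
reflectionless), then Re G = 0 (measure theoretically reflectionless). -/
theorem stmt_11 (a : ℝ) (ha : a ≠ 0) (ml mr : ℂ)
    (hml : 0 < ml.im) (hmr : 0 < mr.im)
    (hden : (a : ℂ) ^ 2 * mr - ml⁻¹ ≠ 0)
    (G : ℂ) (hG : G = -((a : ℂ) ^ 2 * mr - ml⁻¹)⁻¹)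
    (s : Matrix (Fin 2) (Fin 2) ℂ)
    (hs : s = !![1 + 2 * I * (a : ℂ) ^ 2 * G * (ml.im : ℂ),
                 2 * I * (a : ℂ) ^ 2 * G * (Real.sqrt (ml.im * mr.im) : ℂ);
                 2 * I * (a : ℂ) ^ 2 * G * (Real.sqrt (ml.im * mr.im) : ℂ),
                 1 + 2 * I * (a : ℂ) ^ 2 * G * (mr.im : ℂ)])
    (hunit : s.conjTranspose * s = 1)
    (hlr : ‖s 0 1‖ = 1) :
    G.re = 0 :=
  stmt_11_general a ha ml mr hml G s hs hunit hlr
end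

section
/- In the setting of the previous identity, β = 0 if and only if a₀² conj(m_r) m_l = 1; that is, the spectral reflection probability |β/α|² vanishes if and only if the spectrally-reflectionless condition a₀² m_r(λ+i0) conj(m_l(λ+i0)) = 1 holds. -/
/-- The spectral reflection probability vanishes iff the spectrally
reflectionless condition holds: β = 0 ↔ a₀² conj(m_r) m_l = 1. -/
theorem stmt_15 (a₀ : ℝ) (ha₀ : a₀ ≠ 0) (ψl ψr : ℂ) (hψl : ψl ≠ 0)
    (hψr : ψr ≠ 0) (hψrim : ψr.im ≠ 0)
    (α β : ℂ) (hαβ : α + β = 1)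
    (hexp : ψl = α * (starRingEnd ℂ) ψr + β * ψr)
    (mr ml : ℂ) (hmr : mr = -ψr / (a₀ : ℂ))
    (hml : ml = -1 / ((a₀ : ℂ) * ψl)) :
    β = 0 ↔ (a₀ : ℂ) ^ 2 * (starRingEnd ℂ) mr * ml = 1 := by
  have ha : (a₀ : ℂ) ≠ 0 := by exact_mod_cast ha₀
  have hc : (starRingEnd ℂ) ψr ≠ 0 := by simpa using hψr
  have hprod : (a₀ : ℂ) ^ 2 * (starRingEnd ℂ) mr * ml = (starRingEnd ℂ) ψr / ψl := by
    subst hmr hml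
    simp only [map_div₀, map_neg, Complex.conj_ofReal]
    field_simp
  rw [hprod, div_eq_one_iff_eq hψl]
  constructor
  · rintro rfl
    have : α = 1 := by simpa using hαβ
    subst this
    simp [hexp]
  · intro h
    have hne : ψr ≠ (starRingEnd ℂ) ψr := by
      intro he
      apply hψrim
      have := congrArg Complex.im he
      simp [Complex.conj_im] at this
      linarith
    have hβ : β * (ψr - (starRingEnd ℂ) ψr) = 0 := by
      have : α * (starRingEnd ℂ) ψr + β * ψr = (starRingEnd ℂ) ψr := by rw [← hexp, h]
      linear_combination this - hαβ * (starRingEnd ℂ) ψr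
    rcases mul_eq_zero.mp hβ with h1 | h2
    · exact h1
    · exact absurd (sub_eq_zero.mp h2) hne
end
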